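/- arXiv:1511.07981 — 3 statements merged into one kernel-verified Lean document; each statement's English description precedes it below -/
import Mathlib

section
/- Let X be a Polish space and let E be an analytic equivalence relation on X. Then there exists a family (E_α)_{α<ω₁} of Borel subsets of X × X such that: (i) whenever α ≤ β < ω₁, E_β ⊆ E_α; (ii) the graph of E equals ⋂_{α<ω₁} E_α; and (iii) there is a club set C of ordinals below ω₁ such that for every α ∈ C, E_α is the graph of an equivalence relation on X. -/
open MeasureTheory Set

/-- The first uncountable ordinal `ω₁`. -/
noncomputable def omega1 : Ordinal := (Cardinal.aleph 1).ord

/-!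
If `A = f '' univ` with `f : (ℕ → ℕ) → X` continuous, then `y ∈ A` iff the tree of finite
sequences `s` with `y ∈ closure (f '' [s])` has an infinite branch, i.e. is not well founded, i.e.
its root survives every countable stage of the rank derivative. The stages are Borel, so `A` is
the intersection of `ω₁` Borel sets `K β`.

Lusin separation, applied twice, turns every Borel `P ⊇ A` (for `A` analytic, symmetric and
transitive) into a Borel symmetric `H ⊇ A` with `H ○ H ⊆ P`. Let `E α` be the intersection over
`β < α` of such an `H` for `P = K β ∩ E β`. This sequence decreases to `A`, and at a limit stage
`α` the square of `E α` lies in every earlier term, so `E α` is an equivalence relation.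
-/

open Ordinal Order PiNat

theorem omega1_eq_omega_one : omega1 = ω₁ := Cardinal.ord_aleph 1

theorem Ordinal.countable_Iio_of_lt_omega_one {α : Ordinal} (hα : α < ω₁) :
    (Iio α).Countable := by
  rw [← Cardinal.le_aleph0_iff_set_countable, Cardinal.mk_Iio_ordinal, Cardinal.lift_le_aleph0,
    ← Cardinal.lt_aleph_one_iff]
  exact Cardinal.lt_omega_iff_card_lt.1 hα

theorem Ordinal.exists_isSuccLimit_le_of_lt_omega_one {α : Ordinal} (hα : α < ω₁) :
    ∃ β, (β < ω₁ ∧ IsSuccLimit β) ∧ α ≤ β :=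
  ⟨α + ω, ⟨isPrincipal_add_omega 1 hα omega0_lt_omega_one, isSuccLimit_add α isSuccLimit_omega0⟩,
    le_self_add⟩

theorem Order.IsSuccLimit.csSup {γ : Type*} [ConditionallyCompleteLinearOrder γ] {S : Set γ}
    (hne : S.Nonempty) (hbdd : BddAbove S) (hS : ∀ s ∈ S, IsSuccLimit s) :
    IsSuccLimit (sSup S) := by
  by_contra h
  exact h (hS _ (csSup_mem_of_not_isSuccLimit hne hbdd h))

section Pruning

universe u

variable {Y : Type*}

/-- `y ∈ prunedAt F α s` says that the node `s` has rank `< α` in the tree of those `t` with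
`y ∈ F t`, the children of `s` being the nodes `n :: s` (nodes outside the tree are pruned at
every stage). -/
def prunedAt (F : List ℕ → Set Y) (α : Ordinal) (s : List ℕ) : Set Y :=
  (F s)ᶜ ∪ ⋂ n, ⋃ β < α, prunedAt F β (n :: s)
termination_by α

theorem measurableSet_prunedAt [MeasurableSpace Y] {F : List ℕ → Set Y}
    (hF : ∀ s, MeasurableSet (F s)) {α : Ordinal} (hα : α < ω₁) (s : List ℕ) :
    MeasurableSet (prunedAt F α s) := by
  induction α using WellFoundedLT.induction generalizing s with
  | ind α ih =>
    rw [prunedAt]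
    exact (hF s).compl.union <| .iInter fun n =>
      .biUnion (countable_Iio_of_lt_omega_one hα) fun β hβ => ih β hβ (lt_trans hβ hα) _

theorem mem_of_notMem_prunedAt {F : List ℕ → Set Y} {y : Y} {α : Ordinal} {s : List ℕ}
    (h : y ∉ prunedAt F α s) : y ∈ F s := by
  rw [prunedAt] at h
  exact not_not.1 fun hy => h (Or.inl hy)

theorem notMem_prunedAt_res {F : List ℕ → Set Y} {y : Y} {x : ℕ → ℕ}
    (hx : ∀ k, y ∈ F (res x k)) (α : Ordinal) (k : ℕ) : y ∉ prunedAt F α (res x k) := by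
  induction α using WellFoundedLT.induction generalizing k with
  | ind α ih =>
    rw [prunedAt]
    rintro (hyF | hy)
    · exact hyF (hx k)
    · obtain ⟨β, hβ, hyβ⟩ := mem_iUnion₂.1 (mem_iInter.1 hy (x k))
      exact ih β hβ (k + 1) (res_succ x k ▸ hyβ)

theorem exists_forall_res {P : List ℕ → Prop} (h0 : P []) (h : ∀ s, P s → ∃ n, P (n :: s)) :
    ∃ x : ℕ → ℕ, ∀ k, P (res x k) := by
  choose! g hg using h
  let L : ℕ → List ℕ := fun k => k.rec [] fun _ s => g s :: s
  have hL : ∀ k, res (fun i => g (L i)) k = L k := by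
    intro k
    induction k with
    | zero => rfl
    | succ k ih => rw [res_succ, ih]
  refine ⟨fun i => g (L i), fun k => hL k ▸ ?_⟩
  induction k with
  | zero => exact h0
  | succ k ih => exact hg _ ih

theorem exists_cons_notMem_prunedAt {F : List ℕ → Set Y} {y : Y} {s : List ℕ}
    (hs : ∀ α < (ω₁ : Ordinal.{u}), y ∉ prunedAt F α s) :
    ∃ n, ∀ α < (ω₁ : Ordinal.{u}), y ∉ prunedAt F α (n :: s) := by
  by_contra! h
  choose g hgω hgy using h
  -- all children of `s` are pruned by the countable stage `⨆ n, g n`, so `s` is pruned next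
  apply hs _ ((Cardinal.isSuccLimit_omega 1).succ_lt (iSup_lt_omega_one hgω))
  rw [prunedAt]
  exact Or.inr <| mem_iInter.2 fun n =>
    mem_iUnion₂.2 ⟨g n, (Ordinal.le_iSup g n).trans_lt (lt_succ _), hgy n⟩

theorem exists_branch_of_forall_notMem_prunedAt {F : List ℕ → Set Y} {y : Y}
    (hy : ∀ α < (ω₁ : Ordinal.{u}), y ∉ prunedAt F α []) :
    ∃ x : ℕ → ℕ, ∀ k, y ∈ F (res x k) :=
  (exists_forall_res (P := fun s => ∀ α < (ω₁ : Ordinal.{u}), y ∉ prunedAt F α s) hy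
    fun _ => exists_cons_notMem_prunedAt).imp fun _ hx k =>
      mem_of_notMem_prunedAt (hx k 0 (omega_pos 1))

end Pruning

theorem eq_of_forall_mem_closure_image_cylinder {Y : Type*} [TopologicalSpace Y] [T2Space Y]
    {f : (ℕ → ℕ) → Y} (hf : Continuous f) {x : ℕ → ℕ} {y : Y}
    (hy : ∀ n, y ∈ closure (f '' cylinder x n)) : y = f x := by
  by_contra hne
  obtain ⟨U, V, hU, hV, hyU, hxV, hUV⟩ := t2_separation hne
  obtain ⟨_, ⟨x', n, rfl⟩, hx, hsub⟩ :=
    (isTopologicalBasis_cylinders _).exists_subset_of_mem_open (a := x) hxV (hV.preimage hf)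
  rw [← mem_cylinder_iff_eq.1 hx] at hsub
  have hVU : f '' cylinder x n ⊆ Uᶜ :=
    (image_subset_iff.2 hsub).trans (subset_compl_iff_disjoint_left.2 hUV)
  exact closure_minimal hVU hU.isClosed_compl (hy n) hyU

theorem MeasureTheory.AnalyticSet.exists_measurableSet_biInter_eq {Y : Type*} [TopologicalSpace Y]
    [PolishSpace Y] [MeasurableSpace Y] [BorelSpace Y] {A : Set Y} (hA : AnalyticSet A) :
    ∃ K : Ordinal → Set Y, (∀ β < ω₁, MeasurableSet (K β)) ∧ ⋂ β ∈ Iio ω₁, K β = A := by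
  rw [AnalyticSet] at hA
  rcases hA with rfl | ⟨f, hf, rfl⟩
  · exact ⟨fun _ => ∅, fun _ _ => .empty, biInter_const (α := Ordinal) ⟨0, omega_pos 1⟩ ∅⟩
  -- nodes are reversed initial segments, as in `PiNat.res`
  let F : List ℕ → Set Y := fun s => closure (f '' {z | res z s.length = s})
  have hF : ∀ x n, F (res x n) = closure (f '' PiNat.cylinder x n) := fun x n => by
    simp only [F, res_length, PiNat.cylinder_eq_res]
  refine ⟨fun β => (prunedAt F β [])ᶜ, fun β hβ =>
    (measurableSet_prunedAt (fun _ => isClosed_closure.measurableSet) hβ []).compl, ?_⟩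
  apply Subset.antisymm
  · intro y hy
    obtain ⟨x, hx⟩ := exists_branch_of_forall_notMem_prunedAt fun β hβ => mem_iInter₂.1 hy β hβ
    exact ⟨x, (eq_of_forall_mem_closure_image_cylinder hf fun n => hF x n ▸ hx n).symm⟩
  · rintro _ ⟨x, rfl⟩
    exact mem_iInter₂.2 fun β _ => notMem_prunedAt_res (fun k => hF x k ▸
      subset_closure (mem_image_of_mem f (PiNat.self_mem_cylinder x k))) β 0

theorem MeasureTheory.AnalyticSet.inter {Y : Type*} [TopologicalSpace Y] [T2Space Y] {s t : Set Y}
    (hs : AnalyticSet s) (ht : AnalyticSet t) : AnalyticSet (s ∩ t) := by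
  rw [inter_eq_iInter]
  exact .iInter (Bool.forall_bool.2 ⟨ht, hs⟩)

theorem MeasurableSet.setRelInv {X Y : Type*} [MeasurableSpace X] [MeasurableSpace Y]
    {R : SetRel X Y} (hR : MeasurableSet R) : MeasurableSet R.inv :=
  hR.preimage measurable_swap

section Relations

open SetRel

variable {X Y Z : Type*} [TopologicalSpace X] [PolishSpace X] [TopologicalSpace Y] [PolishSpace Y]
  [TopologicalSpace Z] [PolishSpace Z]

theorem MeasureTheory.AnalyticSet.setRelComp {R : SetRel X Y} {S : SetRel Y Z}
    (hR : AnalyticSet R) (hS : AnalyticSet S) : AnalyticSet (R ○ S) := by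
  have hRS : R ○ S = (fun w : X × Y × Z => (w.1, w.2.2)) ''
      ((fun w => (w.1, w.2.1)) ⁻¹' R ∩ Prod.snd ⁻¹' S) := by
    ext ⟨x, z⟩
    simp [mem_comp]
  rw [hRS]
  exact ((hR.preimage (f := fun w : X × Y × Z => (w.1, w.2.1)) (by fun_prop)).inter
    (hS.preimage continuous_snd)).image_of_continuous (by fun_prop)

variable [MeasurableSpace X] [BorelSpace X] [MeasurableSpace Y] [BorelSpace Y]
  [MeasurableSpace Z] [BorelSpace Z]

/-- Lusin separation, in the form of a reflection principle for composition. -/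
theorem exists_measurableSet_comp_subset {A : SetRel X Y} {S : SetRel Y Z} {P : SetRel X Z}
    (hA : AnalyticSet A) (hS : AnalyticSet S) (hP : MeasurableSet P) (h : A ○ S ⊆ P) :
    ∃ U : SetRel X Y, MeasurableSet U ∧ A ⊆ U ∧ U ○ S ⊆ P := by
  have hdisj : Disjoint A (Pᶜ ○ S.inv) := Set.disjoint_left.2
    fun _ hxy ⟨_, hxz, hyz⟩ => hxz (h ⟨_, hxy, hyz⟩)
  obtain ⟨U, hAU, hU, hUm⟩ :=
    hA.measurablySeparable (hP.compl.analyticSet.setRelComp (hS.preimage continuous_swap)) hdisj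
  refine ⟨U, hUm, hAU, fun ⟨x, z⟩ ⟨y, hxy, hyz⟩ => not_not.1 fun hxz => ?_⟩
  exact Set.disjoint_left.1 hU (show (x, y) ∈ Pᶜ ○ S.inv from ⟨z, hxz, hyz⟩) hxy

theorem exists_measurableSet_isSymm_comp_subset {A P : SetRel X X} [A.IsSymm] [A.IsTrans]
    (hA : AnalyticSet A) (hP : MeasurableSet P) (hAP : A ⊆ P) :
    ∃ H : SetRel X X, MeasurableSet H ∧ A ⊆ H ∧ H.IsSymm ∧ H ○ H ⊆ P := by
  obtain ⟨U, hUm, hAU, hUA⟩ :=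
    exists_measurableSet_comp_subset hA hA hP (comp_subset_self.trans hAP)
  -- invert `U ○ A ⊆ P` and separate once more
  have hAU' : A ○ U.inv ⊆ P.inv := by
    simpa using inv_mono hUA
  obtain ⟨V, hVm, hAV, hVU⟩ :=
    exists_measurableSet_comp_subset hA hUm.setRelInv.analyticSet hP.setRelInv hAU'
  have hAUV : A ⊆ U ∩ V.inv := subset_inter hAU (by simpa using inv_mono hAV)
  have hUV : U ○ V.inv ⊆ P := by simpa using inv_mono hVU
  have hm : MeasurableSet (U ∩ V.inv) := hUm.inter hVm.setRelInv
  refine ⟨(U ∩ V.inv).symmetrize, hm.inter hm.setRelInv,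
    subset_symmetrize.2 ⟨hAUV, by simpa using inv_mono hAUV⟩, inferInstance, ?_⟩
  exact (comp_subset_comp (symmetrize_subset_self.trans inter_subset_left)
    (symmetrize_subset_self.trans inter_subset_right)).trans hUV

end Relations

section Approximation

open SetRel

variable {X : Type*} [MeasurableSpace X] {A P : SetRel X X}

open Classical in
/-- A Borel symmetric relation `H ⊇ A` with `H ○ H ⊆ P`, chosen when one exists (and `A`
otherwise). -/
noncomputable def borelRoot (A P : SetRel X X) : SetRel X X :=
  if h : ∃ H : SetRel X X, MeasurableSet H ∧ A ⊆ H ∧ H.IsSymm ∧ H ○ H ⊆ P then h.choose else A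

theorem subset_borelRoot : A ⊆ borelRoot A P := by
  rw [borelRoot]
  split_ifs with h
  exacts [h.choose_spec.2.1, subset_rfl]

instance isSymm_borelRoot [A.IsSymm] : (borelRoot A P).IsSymm := by
  rw [borelRoot]
  split_ifs with h
  exacts [h.choose_spec.2.2.1, inferInstance]

def burgessSeq (A : SetRel X X) (K : Ordinal → SetRel X X) (α : Ordinal) : SetRel X X :=
  ⋂ β < α, borelRoot A (K β ∩ burgessSeq A K β)
termination_by α

variable {K : Ordinal → SetRel X X}

theorem burgessSeq_anti : Antitone (burgessSeq A K) := by
  intro α β hαβ p hp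
  rw [burgessSeq] at hp ⊢
  exact mem_iInter₂.2 fun γ hγ => mem_iInter₂.1 hp γ (hγ.trans_le hαβ)

theorem burgessSeq_succ_subset (β : Ordinal) :
    burgessSeq A K (succ β) ⊆ borelRoot A (K β ∩ burgessSeq A K β) := by
  rw [burgessSeq]
  exact biInter_subset_of_mem (lt_succ β)

theorem subset_burgessSeq (α : Ordinal) : A ⊆ burgessSeq A K α := by
  rw [burgessSeq]
  exact subset_iInter₂ fun _ _ => subset_borelRoot

instance isSymm_burgessSeq [A.IsSymm] (α : Ordinal) : (burgessSeq A K α).IsSymm := by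
  rw [burgessSeq]
  infer_instance

variable [TopologicalSpace X] [PolishSpace X] [BorelSpace X] [A.IsSymm] [A.IsTrans]

theorem borelRoot_spec (hA : AnalyticSet A) (hP : MeasurableSet P) (hAP : A ⊆ P) :
    MeasurableSet (borelRoot A P) ∧ borelRoot A P ○ borelRoot A P ⊆ P := by
  have h := exists_measurableSet_isSymm_comp_subset hA hP hAP
  rw [borelRoot, dif_pos h]
  exact ⟨h.choose_spec.1, h.choose_spec.2.2.2⟩

theorem borelRoot_subset [A.IsRefl] (hA : AnalyticSet A) (hP : MeasurableSet P) (hAP : A ⊆ P) :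
    borelRoot A P ⊆ P :=
  have : (borelRoot A P).IsRefl := isRefl_mono subset_borelRoot
  left_subset_comp.trans (borelRoot_spec hA hP hAP).2

theorem measurableSet_burgessSeq (hA : AnalyticSet A) (hK : ∀ β < ω₁, MeasurableSet (K β))
    (hAK : ∀ β < ω₁, A ⊆ K β) {α : Ordinal} (hα : α < ω₁) :
    MeasurableSet (burgessSeq A K α) := by
  induction α using WellFoundedLT.induction with
  | ind α ih =>
    rw [burgessSeq]
    exact .biInter (countable_Iio_of_lt_omega_one hα) fun β hβ =>
      (borelRoot_spec hA ((hK β (lt_trans hβ hα)).inter (ih β hβ (lt_trans hβ hα)))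
        (subset_inter (hAK β (lt_trans hβ hα)) (subset_burgessSeq β))).1

theorem burgessSeq_succ_comp_subset (hA : AnalyticSet A) (hK : ∀ β < ω₁, MeasurableSet (K β))
    (hAK : ∀ β < ω₁, A ⊆ K β) {β : Ordinal} (hβ : β < ω₁) :
    burgessSeq A K (succ β) ○ burgessSeq A K (succ β) ⊆ K β ∩ burgessSeq A K β :=
  (comp_subset_comp (burgessSeq_succ_subset β) (burgessSeq_succ_subset β)).trans
    (borelRoot_spec hA ((hK β hβ).inter (measurableSet_burgessSeq hA hK hAK hβ))
      (subset_inter (hAK β hβ) (subset_burgessSeq β))).2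

theorem burgessSeq_comp_subset_of_isSuccLimit (hA : AnalyticSet A)
    (hK : ∀ β < ω₁, MeasurableSet (K β)) (hAK : ∀ β < ω₁, A ⊆ K β) {α : Ordinal}
    (hα : α < ω₁) (hlim : IsSuccLimit α) :
    burgessSeq A K α ○ burgessSeq A K α ⊆ burgessSeq A K α := by
  intro p hp
  rw [burgessSeq]
  refine mem_iInter₂.2 fun β hβ => burgessSeq_succ_subset β ?_
  -- the square of the term at `succ (succ β) < α` lies in the term at `succ β`
  have hβ₂ : succ (succ β) < α := hlim.succ_lt (hlim.succ_lt hβ)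
  have hsq := comp_subset_comp (burgessSeq_anti (A := A) (K := K) hβ₂.le)
    (burgessSeq_anti (A := A) (K := K) hβ₂.le)
  exact (burgessSeq_succ_comp_subset hA hK hAK ((hlim.succ_lt hβ).trans hα) (hsq hp)).2

theorem biInter_burgessSeq [A.IsRefl] (hA : AnalyticSet A) (hK : ∀ β < ω₁, MeasurableSet (K β))
    (hKA : ⋂ β ∈ Iio ω₁, K β = A) : ⋂ α ∈ Iio ω₁, burgessSeq A K α = A := by
  have hAK : ∀ β < ω₁, A ⊆ K β := fun β hβ => hKA ▸ biInter_subset_of_mem hβ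
  refine (subset_iInter₂ fun α _ => subset_burgessSeq α).antisymm' fun p hp => ?_
  rw [← hKA]
  refine mem_iInter₂.2 fun β hβ => ?_
  have hβ' : succ β < ω₁ := (Cardinal.isSuccLimit_omega 1).succ_lt hβ
  exact (borelRoot_subset hA ((hK β hβ).inter (measurableSet_burgessSeq hA hK hAK hβ))
    (subset_inter (hAK β hβ) (subset_burgessSeq β)) (burgessSeq_succ_subset β
      (mem_iInter₂.1 hp _ hβ'))).1

end Approximation

/-- Burgess's theorem: an analytic equivalence relation on a Polish space is the
intersection of a decreasing `ω₁`-sequence of Borel sets which are equivalence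
relations on a club of indices. -/
theorem analytic_equivalence_decreasing_borel_approximations
    {X : Type*} [TopologicalSpace X] [PolishSpace X]
    [MeasurableSpace X] [BorelSpace X]
    (E : X → X → Prop) (hE : Equivalence E)
    (hEan : AnalyticSet {p : X × X | E p.1 p.2}) :
    ∃ Eseq : Ordinal → Set (X × X),
      (∀ α < omega1, MeasurableSet (Eseq α)) ∧
      (∀ α β : Ordinal, α ≤ β → β < omega1 → Eseq β ⊆ Eseq α) ∧
      ({p : X × X | E p.1 p.2} = ⋂ α ∈ Iio omega1, Eseq α) ∧
      ∃ C : Set Ordinal, C ⊆ Iio omega1 ∧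
        (∀ α < omega1, ∃ β ∈ C, α ≤ β) ∧
        (∀ S : Set Ordinal, S ⊆ C → S.Nonempty →
          (∃ β < omega1, ∀ s ∈ S, s ≤ β) → sSup S ∈ C) ∧
        (∀ α ∈ C, Equivalence (fun x y : X => (x, y) ∈ Eseq α)) := by
  set A : SetRel X X := {p | E p.1 p.2}
  have : A.IsRefl := ⟨hE.refl⟩
  have : A.IsSymm := ⟨fun _ _ => hE.symm⟩
  have : A.IsTrans := ⟨fun _ _ _ => hE.trans⟩
  rw [omega1_eq_omega_one]
  obtain ⟨K, hK, hKA⟩ := hEan.exists_measurableSet_biInter_eq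
  have hAK : ∀ β < ω₁, A ⊆ K β := fun β hβ => hKA ▸ biInter_subset_of_mem hβ
  refine ⟨burgessSeq A K, fun _ => measurableSet_burgessSeq hEan hK hAK,
    fun _ _ hαβ _ => burgessSeq_anti hαβ, (biInter_burgessSeq hEan hK hKA).symm,
    {α | α < ω₁ ∧ IsSuccLimit α}, fun _ h => h.1, fun _ => exists_isSuccLimit_le_of_lt_omega_one,
    fun S hSC hne ⟨β, hβ, hSβ⟩ => ⟨(csSup_le hne hSβ).trans_lt hβ,
      .csSup hne ⟨β, hSβ⟩ fun s hs => (hSC hs).2⟩, fun α ⟨hα, hlim⟩ => ?_⟩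
  have : (burgessSeq A K α).IsRefl := SetRel.isRefl_mono (subset_burgessSeq α)
  have : (burgessSeq A K α).IsTrans := SetRel.isTrans_iff_comp_subset_self.2
    (burgessSeq_comp_subset_of_isSuccLimit hEan hK hAK hα hlim)
  exact ⟨SetRel.refl _, SetRel.symm _, SetRel.trans _⟩
end

section
/- Let X be a Polish space, E an analytic equivalence relation on X, and (E_α)_{α<ω₁} a family of subsets of X × X such that E_β ⊆ E_α whenever α ≤ β < ω₁, the graph of E equals ⋂_{α<ω₁} E_α, and for every analytic set S ⊆ (X × X) \ E there exists α < ω₁ with S ∩ E_α = ∅. If x ∈ X is such that the class [x]_E is Borel, then there exists α₀ < ω₁ such that for every α with α₀ ≤ α < ω₁ one has {y ∈ X : (y,x) ∈ E_α} = [x]_E. -/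
open MeasureTheory Set

/-- Stabilization of Borel classes of an analytic equivalence relation: if the
class `[x]_E` is Borel, then from some countable stage `α₀` on, the section of
`E_α` at `x` equals `[x]_E`. -/
theorem analytic_equivalence_borel_class_stabilizes
    {X : Type*} [TopologicalSpace X] [PolishSpace X]
    [MeasurableSpace X] [BorelSpace X]
    (E : X → X → Prop) (hE : Equivalence E)
    (hEan : AnalyticSet {p : X × X | E p.1 p.2})
    (Eseq : Ordinal → Set (X × X))
    (hmono : ∀ α β : Ordinal, α ≤ β → β < omega1 → Eseq β ⊆ Eseq α)
    (hint : {p : X × X | E p.1 p.2} = ⋂ α ∈ Iio omega1, Eseq α)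
    (hbdd : ∀ S : Set (X × X), AnalyticSet S → S ⊆ {p : X × X | E p.1 p.2}ᶜ →
      ∃ α < omega1, S ∩ Eseq α = ∅)
    (x : X) (hx : MeasurableSet {y : X | E y x}) :
    ∃ α₀ < omega1, ∀ α : Ordinal, α₀ ≤ α → α < omega1 →
      {y : X | (y, x) ∈ Eseq α} = {y : X | E y x} := by
  set S : Set (X × X) := {y : X | E y x}ᶜ ×ˢ ({x} : Set X) with hS
  have hSmeas : MeasurableSet S := hx.compl.prod (measurableSet_singleton x)
  have hSan : AnalyticSet S := hSmeas.analyticSet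
  have hSsub : S ⊆ {p : X × X | E p.1 p.2}ᶜ := by
    rintro ⟨y, z⟩ ⟨hy, hz⟩
    simp only [mem_singleton_iff] at hz
    subst hz
    exact hy
  obtain ⟨α₀, hα₀, hdisj⟩ := hbdd S hSan hSsub
  refine ⟨α₀, hα₀, fun α hle hlt => ?_⟩
  ext y
  constructor
  · intro hy
    by_contra hny
    have : (y, x) ∈ S ∩ Eseq α₀ := ⟨⟨hny, rfl⟩, hmono α₀ α hle hlt hy⟩
    rw [hdisj] at this
    exact this
  · intro hy
    have : (y, x) ∈ {p : X × X | E p.1 p.2} := hy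
    rw [hint] at this
    exact mem_iInter₂.mp this α hlt
end

section
/- Let C ⊆ ℝ be a Borel set that is linearly independent over ℚ (i.e., linearly independent as a subset of ℝ viewed as a ℚ-vector space). Then the additive subgroup of (ℝ, +) generated by C is a Borel subset of ℝ. -/
/-!
Every element of the subgroup generated by `C` is `∑ i, kᵢ • xᵢ` for some `n`, nonzero integer
coefficients `k : Fin n → ℤ` and a strictly increasing tuple `x` of points of `C`. Linear
independence says that the multiset of pairs `(xᵢ, kᵢ)` is recovered from the sum, and ordering the
`xᵢ` removes the permutation ambiguity, so for fixed `n` and `k` the map `x ↦ ∑ i, kᵢ • xᵢ` is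
injective on the Borel set of such tuples. The subgroup is therefore a countable union of
continuous injective images of Borel subsets of `ℝⁿ`, which are Borel by the Lusin–Souslin theorem.
-/

open MeasureTheory Set

def sortedTuples {α : Type*} [Preorder α] (C : Set α) (n : ℕ) : Set (Fin n → α) :=
  {x | StrictMono x} ∩ univ.pi fun _ => C

section Topology

variable {α : Type*} [LinearOrder α] [TopologicalSpace α] [OrderClosedTopology α]

theorem isOpen_setOf_strictMono (n : ℕ) : IsOpen {x : Fin n → α | StrictMono x} := by
  have h : {x : Fin n → α | StrictMono x} =
      ⋂ (i : Fin n) (j : Fin n) (_ : i < j), {x | x i < x j} := by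
    ext x
    simp [StrictMono]
  rw [h]
  exact isOpen_iInter_of_finite fun i => isOpen_iInter_of_finite fun j =>
    isOpen_iInter_of_finite fun _ => isOpen_lt (continuous_apply i) (continuous_apply j)

theorem measurableSet_sortedTuples [SecondCountableTopology α] [MeasurableSpace α]
    [OpensMeasurableSpace α] {C : Set α} (hC : MeasurableSet C) (n : ℕ) :
    MeasurableSet (sortedTuples C n) :=
  (isOpen_setOf_strictMono n).measurableSet.inter (.univ_pi fun _ => hC)

end Topology

theorem injOn_sum_smul_sortedTuples {R M : Type*} [Ring R] [AddCommGroup M] [Module R M]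
    [LinearOrder M] {C : Set M} (hC : LinearIndepOn R id C) {n : ℕ} {k : Fin n → R}
    (hk : ∀ i, k i ≠ 0) :
    InjOn (fun x : Fin n → M => ∑ i, k i • x i) (sortedTuples C n) := by
  classical
  let c : (Fin n → M) → M →₀ R := fun x => (Finsupp.equivFunOnFinite.symm k).mapDomain x
  have hsum (x : Fin n → M) : Finsupp.linearCombination R id (c x) = ∑ i, k i • x i := by
    rw [Finsupp.linearCombination_mapDomain, Finsupp.linearCombination_apply]
    simp [Finsupp.sum_fintype]
  have hsupp {x : Fin n → M} (hx : StrictMono x) : ((c x).support : Set M) = range x := by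
    rw [Finsupp.mapDomain_support_of_injective hx.injective]
    ext
    simp [hk]
  have hsupported {x : Fin n → M} (hx : x ∈ sortedTuples C n) :
      c x ∈ Finsupp.supported R R C := by
    rw [Finsupp.mem_supported, hsupp hx.1]
    rintro _ ⟨i, rfl⟩
    exact hx.2 i trivial
  intro x hx y hy hxy
  have hcxy : c x = c y :=
    linearIndepOn_iffₛ.1 hC _ (hsupported hx) _ (hsupported hy) (by simpa only [hsum] using hxy)
  rw [← hx.1.range_inj hy.1, ← hsupp hx.1, ← hsupp hy.1, hcxy]

theorem addSubgroup_closure_eq_iUnion_image_sortedTuples {M : Type*} [AddCommGroup M]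
    [LinearOrder M] (C : Set M) :
    (AddSubgroup.closure C : Set M) =
      ⋃ (n : ℕ) (k : {k : Fin n → ℤ // ∀ i, k i ≠ 0}),
        (fun x : Fin n → M => ∑ i, k.1 i • x i) '' sortedTuples C n := by
  ext a
  simp only [mem_iUnion]
  constructor
  · intro ha
    rw [← Submodule.span_int_eq_addSubgroupClosure, Submodule.coe_toAddSubgroup,
      SetLike.mem_coe, Submodule.mem_span_set] at ha
    obtain ⟨c, hcC, rfl⟩ := ha
    let e := c.support.orderIsoOfFin rfl
    have hsorted : (fun i => (e i : M)) ∈ sortedTuples C c.support.card :=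
      ⟨(Subtype.strictMono_coe _).comp e.strictMono, fun i _ => hcC (e i).2⟩
    have hsum : ∑ i, c (e i) • (e i : M) = c.sum fun m r => r • m :=
      (Equiv.sum_comp e.toEquiv fun m : c.support => c m • (m : M)).trans
        (c.support.sum_coe_sort fun m => c m • m)
    exact ⟨_, ⟨_, fun i => Finsupp.mem_support_iff.1 (e i).2⟩, _, hsorted, hsum⟩
  · rintro ⟨n, k, x, ⟨-, hxC⟩, rfl⟩
    exact sum_mem fun i _ => zsmul_mem (AddSubgroup.subset_closure (hxC i trivial)) _

/-- The additive subgroup of `ℝ` generated by a Borel set that is linearly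
independent over `ℚ` is Borel. -/
theorem measurableSet_addSubgroup_closure_of_linearIndependent
    (C : Set ℝ) (hC : MeasurableSet C)
    (hind : LinearIndependent ℚ ((↑) : C → ℝ)) :
    MeasurableSet ((AddSubgroup.closure C : AddSubgroup ℝ) : Set ℝ) := by
  have hindℤ : LinearIndepOn ℤ id C := hind.restrict_scalars' ℤ
  rw [addSubgroup_closure_eq_iUnion_image_sortedTuples]
  refine .iUnion fun n => .iUnion fun k => ?_
  exact (measurableSet_sortedTuples hC n).image_of_continuousOn_injOn (by fun_prop)
    (injOn_sum_smul_sortedTuples hindℤ k.2)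
end
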